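/- arXiv:1810.06456 — 5 statements merged into one kernel-verified Lean document; each statement's English description precedes it below -/
import Mathlib

section
/- Let M be any left module over U = U_q(sp₄), let n₁, n₂ be natural numbers, and let v ∈ M satisfy E₁v = 0, E₂v = 0, K₁v = q^{n₁}v, K₁⁻¹v = q^{−n₁}v, K₂v = q^{2n₂}v, K₂⁻¹v = q^{−2n₂}v (i.e. v is a highest weight vector of weight Λ = n₁ω₁ + n₂ω₂). Then 𝒞v = c·v, where c = (q^{−2(n₁+n₂+2)} + q^{−2(n₂+1)} + q^{2(n₂+1)} + q^{2(n₁+n₂+2)})/(q − q⁻¹)². -/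
noncomputable section

open scoped TensorProduct RealInnerProductSpace

/-- The quantum integer `[n]_q = (q^n - q^(-n))/(q - q⁻¹)`. -/
def qnum (q : ℝ) (n : ℤ) : ℝ := (q ^ n - q ^ (-n)) / (q - q⁻¹)

/-- Generators of `U_q(sp₄)` inside an arbitrary ℝ-algebra `U`, together with the
defining relations of the presented algebra `U_q(sp₄)`. -/
structure Sp4Gens (q : ℝ) (U : Type) [Ring U] [Algebra ℝ U] : Type where
  E1 : U
  E2 : U
  F1 : U
  F2 : U
  K1 : U
  K1i : U
  K2 : U
  K2i : U
  relK1 : K1 * K1i = 1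
  relK1' : K1i * K1 = 1
  relK2 : K2 * K2i = 1
  relK2' : K2i * K2 = 1
  relK12 : K1 * K2 = K2 * K1
  relK12i : K1 * K2i = K2i * K1
  relK1i2 : K1i * K2 = K2 * K1i
  relK1i2i : K1i * K2i = K2i * K1i
  relK1E1 : K1 * E1 = (q ^ (2 : ℤ)) • (E1 * K1)
  relK1E2 : K1 * E2 = (q ^ (-2 : ℤ)) • (E2 * K1)
  relK2E1 : K2 * E1 = (q ^ (-2 : ℤ)) • (E1 * K2)
  relK2E2 : K2 * E2 = (q ^ (4 : ℤ)) • (E2 * K2)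
  relK1F1 : K1 * F1 = (q ^ (-2 : ℤ)) • (F1 * K1)
  relK1F2 : K1 * F2 = (q ^ (2 : ℤ)) • (F2 * K1)
  relK2F1 : K2 * F1 = (q ^ (2 : ℤ)) • (F1 * K2)
  relK2F2 : K2 * F2 = (q ^ (-4 : ℤ)) • (F2 * K2)
  relE1F1 : E1 * F1 - F1 * E1 = (q - q⁻¹)⁻¹ • (K1 - K1i)
  relE2F2 : E2 * F2 - F2 * E2 = (q ^ (2 : ℤ) - q ^ (-2 : ℤ))⁻¹ • (K2 - K2i)
  relE1F2 : E1 * F2 = F2 * E1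
  relE2F1 : E2 * F1 = F1 * E2
  serreE1 : E1 ^ 3 * E2 - qnum q 3 • (E1 ^ 2 * E2 * E1) + qnum q 3 • (E1 * E2 * E1 ^ 2)
      - E2 * E1 ^ 3 = 0
  serreE2 : E2 ^ 2 * E1 - (q ^ (2 : ℤ) + q ^ (-2 : ℤ)) • (E2 * E1 * E2) + E1 * E2 ^ 2 = 0
  serreF1 : F1 ^ 3 * F2 - qnum q 3 • (F1 ^ 2 * F2 * F1) + qnum q 3 • (F1 * F2 * F1 ^ 2)
      - F2 * F1 ^ 3 = 0
  serreF2 : F2 ^ 2 * F1 - (q ^ (2 : ℤ) + q ^ (-2 : ℤ)) • (F2 * F1 * F2) + F1 * F2 ^ 2 = 0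

variable {q : ℝ} {U : Type} [Ring U] [Algebra ℝ U]

/-- The quantum root vector `E_{β₁} = E₁`. -/
def Eb1 (g : Sp4Gens q U) : U := g.E1

/-- The quantum root vector `E_{β₂}`. -/
def Eb2 (g : Sp4Gens q U) : U :=
  (qnum q 2)⁻¹ • (g.E1 ^ 2 * g.E2) - q⁻¹ • (g.E1 * g.E2 * g.E1)
    + (q ^ (-2 : ℤ) * (qnum q 2)⁻¹) • (g.E2 * g.E1 ^ 2)

/-- The quantum root vector `E_{β₃}`. -/
def Eb3 (g : Sp4Gens q U) : U := g.E1 * g.E2 - (q ^ (-2 : ℤ)) • (g.E2 * g.E1)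

/-- The quantum root vector `E_{β₄} = E₂`. -/
def Eb4 (g : Sp4Gens q U) : U := g.E2

/-- `E_{β₁}* = F₁K₁`, the image of `E_{β₁}` under the star anti-automorphism
(the star is the unique ℝ-linear anti-automorphism with `Eᵢ* = FᵢKᵢ`, `Fᵢ* = Kᵢ⁻¹Eᵢ`,
`Kᵢ* = Kᵢ`; on the elements below its value is forced by anti-multiplicativity). -/
def sEb1 (g : Sp4Gens q U) : U := g.F1 * g.K1

/-- `E_{β₂}*`, the image of `E_{β₂}` under the star anti-automorphism. -/
def sEb2 (g : Sp4Gens q U) : U :=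
  (qnum q 2)⁻¹ • (g.F2 * g.K2 * (g.F1 * g.K1) ^ 2)
    - q⁻¹ • (g.F1 * g.K1 * (g.F2 * g.K2) * (g.F1 * g.K1))
    + (q ^ (-2 : ℤ) * (qnum q 2)⁻¹) • ((g.F1 * g.K1) ^ 2 * (g.F2 * g.K2))

/-- `E_{β₃}*`, the image of `E_{β₃}` under the star anti-automorphism. -/
def sEb3 (g : Sp4Gens q U) : U :=
  g.F2 * g.K2 * (g.F1 * g.K1) - (q ^ (-2 : ℤ)) • (g.F1 * g.K1 * (g.F2 * g.K2))

/-- `E_{β₄}* = F₂K₂`, the image of `E_{β₄}` under the star anti-automorphism. -/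
def sEb4 (g : Sp4Gens q U) : U := g.F2 * g.K2

/-- The quantized Levi factor `U_q(𝔩)`, i.e. the unital subalgebra generated by
`E₁, F₁, K₁, K₁⁻¹, K₂, K₂⁻¹`. -/
def Uql (g : Sp4Gens q U) : Subalgebra ℝ U :=
  Algebra.adjoin ℝ {g.E1, g.F1, g.K1, g.K1i, g.K2, g.K2i}

/-- The classical part `𝒞_c` of the Casimir element. -/
def CasC (g : Sp4Gens q U) : U :=
  ((q - q⁻¹) ^ 2)⁻¹ •
      ((q ^ (-4 : ℤ)) • (g.K1i ^ 2 * g.K2i) + (q ^ (-2 : ℤ)) • g.K2i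
        + (q ^ (2 : ℤ)) • g.K2 + (q ^ (4 : ℤ)) • (g.K1 ^ 2 * g.K2))
    + sEb1 g * Eb1 g * ((q ^ (-5 : ℤ)) • (g.K1i ^ 2 * g.K2i) + q • g.K2)
    + (qnum q 2 ^ 2 * q ^ (-6 : ℤ)) • (sEb2 g * Eb2 g * (g.K1i ^ 2 * g.K2i))
    + sEb3 g * Eb3 g * ((q ^ (-7 : ℤ)) • (g.K1i ^ 2 * g.K2i) + q⁻¹ • g.K2i)
    + (qnum q 2 ^ 2 * q ^ (-4 : ℤ)) • (sEb4 g * Eb4 g * g.K2i)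

/-- The quantum part `𝒞_q` of the Casimir element. -/
def CasQ (g : Sp4Gens q U) : U :=
  -(((q - q⁻¹) * qnum q 2 * q ^ (-5 : ℤ)) •
      ((sEb1 g * sEb3 g * Eb2 g + sEb2 g * Eb3 g * Eb1 g) * (g.K1i ^ 2 * g.K2i)))
    - ((q - q⁻¹) * qnum q 2 * q ^ (-7 : ℤ)) •
        ((sEb1 g * sEb4 g * Eb3 g + sEb3 g * Eb4 g * Eb1 g) * (g.K1i ^ 2 * g.K2i))
    + ((q - q⁻¹) ^ 2 * q ^ (-4 : ℤ)) •
        (sEb1 g * sEb3 g * Eb3 g * Eb1 g * (g.K1i ^ 2 * g.K2i))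
    + ((q - q⁻¹) ^ 2 * qnum q 2 ^ 2 * q ^ (-7 : ℤ)) •
        (sEb1 g * sEb4 g * Eb4 g * Eb1 g * (g.K1i ^ 2 * g.K2i))

/-- The Casimir element `𝒞 = 𝒞_c + 𝒞_q`. -/
def Cas (g : Sp4Gens q U) : U := CasC g + CasQ g

section HW

variable {M : Type} [AddCommGroup M] [Module ℝ M]

lemma Eb1_hw (g : Sp4Gens q (Module.End ℝ M)) (v : M) (hE1 : g.E1 v = 0) :
    Eb1 g v = 0 := hE1

lemma Eb2_hw (g : Sp4Gens q (Module.End ℝ M)) (v : M) (hE1 : g.E1 v = 0)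
    (hE2 : g.E2 v = 0) : Eb2 g v = 0 := by
  simp [Eb2, Module.End.mul_apply, pow_two, hE1, hE2]

lemma Eb3_hw (g : Sp4Gens q (Module.End ℝ M)) (v : M) (hE1 : g.E1 v = 0)
    (hE2 : g.E2 v = 0) : Eb3 g v = 0 := by
  simp [Eb3, Module.End.mul_apply, hE1, hE2]

lemma Eb4_hw (g : Sp4Gens q (Module.End ℝ M)) (v : M) (hE2 : g.E2 v = 0) :
    Eb4 g v = 0 := hE2

end HW

/-- on a highest weight vector of weight `Λ = n₁ω₁ + n₂ω₂` in any
`U_q(sp₄)`-module, the Casimir `𝒞` acts by the scalar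
`(q^{-2(n₁+n₂+2)} + q^{-2(n₂+1)} + q^{2(n₂+1)} + q^{2(n₁+n₂+2)})/(q - q⁻¹)²`. -/
theorem casimir_on_highest_weight_vector (hq0 : 0 < q) (hq1 : q < 1)
    {M : Type} [AddCommGroup M] [Module ℝ M]
    (g : Sp4Gens q (Module.End ℝ M)) (n1 n2 : ℕ) (v : M)
    (hE1 : g.E1 v = 0) (hE2 : g.E2 v = 0)
    (hK1 : g.K1 v = (q ^ (n1 : ℤ)) • v)
    (hK1i : g.K1i v = (q ^ (-(n1 : ℤ))) • v)
    (hK2 : g.K2 v = (q ^ (2 * (n2 : ℤ))) • v)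
    (hK2i : g.K2i v = (q ^ (-(2 * (n2 : ℤ)))) • v) :
    Cas g v =
      ((q ^ (-(2 * ((n1 : ℤ) + (n2 : ℤ) + 2))) + q ^ (-(2 * ((n2 : ℤ) + 1)))
          + q ^ (2 * ((n2 : ℤ) + 1)) + q ^ (2 * ((n1 : ℤ) + (n2 : ℤ) + 2)))
        / (q - q⁻¹) ^ 2) • v := by
  have hq : q ≠ 0 := ne_of_gt hq0
  have h1 := Eb1_hw g v hE1
  have h2 := Eb2_hw g v hE1 hE2
  have h3 := Eb3_hw g v hE1 hE2
  have h4 := Eb4_hw g v hE2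
  simp only [Cas, CasC, CasQ, LinearMap.add_apply, LinearMap.sub_apply, LinearMap.neg_apply,
    LinearMap.smul_apply, Module.End.mul_apply, pow_two, hK1, hK1i, hK2, hK2i,
    map_smul, map_add, h1, h2, h3, h4, smul_zero, map_zero, add_zero, zero_add, sub_zero,
    neg_zero, smul_smul, ← add_smul]
  congr 1
  rw [div_eq_inv_mul]
  congr 1
  simp only [← zpow_add₀ hq]
  have e : ∀ a b : ℤ, a = b → q ^ a = q ^ b := fun a b h => by rw [h]
  congr 1
  · congr 1
    · congr 1 <;> exact e _ _ (by ring)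
    · exact e _ _ (by ring)
  · exact e _ _ (by ring)
end
end

section
/- In U = U_q(sp₄) the following identity holds: 𝒞 = (q⁻⁴K₁⁻²K₂⁻¹ + q⁻²K₂⁻¹ + q²K₂ + q⁴K₁²K₂)/(q − q⁻¹)² + E_{β₁}*E_{β₁}(q⁻⁵K₁⁻²K₂⁻¹ + qK₂) + [2]_q²E_{β₂}*E_{β₂}q⁻⁴K₁⁻²K₂⁻¹ + E_{β₃}*E_{β₃}((q⁻⁵ − Qq⁻²)K₁⁻²K₂⁻¹ + q⁻¹K₂⁻¹ + Q²q⁻⁴E_{β₁}*E_{β₁}K₁⁻²K₂⁻¹) + E_{β₄}*E_{β₄}[2]_q²(q⁻⁴K₂⁻¹ − Qq⁻⁵K₁⁻²K₂⁻¹ + Q²q⁻⁷E_{β₁}*E_{β₁}K₁⁻²K₂⁻¹) − Q[2]_q q⁻⁵(q²E_{β₂}*E_{β₃}E_{β₁} + q²E_{β₃}*E_{β₂}E_{β₁}* + E_{β₃}*E_{β₄}E_{β₁} + E_{β₄}*E_{β₃}E_{β₁}*)K₁⁻²K₂⁻¹. (Rewriting of the Casimir with all factors E_{β₁}, E_{β₁}*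 moved to the right.) -/
noncomputable section

open scoped TensorProduct RealInnerProductSpace

variable {q : ℝ} {U : Type} [Ring U] [Algebra ℝ U]

section CasimirAux

variable (g : Sp4Gens q U)

private lemma mul_mul_trail {a b e : U} (h : a * b = e) (x : U) :
    a * (b * x) = e * x := by rw [← mul_assoc, h]

private lemma sp4_conj_inv (a k ki : U) (c : ℝ) (hc : c ≠ 0)
    (hki : ki * k = 1) (hik : k * ki = 1) (h : k * a = c • (a * k)) :
    ki * a = c⁻¹ • (a * ki) := by
  have e1 : a = c • (ki * (a * k)) := by
    have h2 : ki * (k * a) = ki * (c • (a * k)) := by rw [h]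
    rwa [← mul_assoc, hki, one_mul, mul_smul_comm] at h2
  have e2 : a * ki = c • (ki * a) := by
    conv_lhs => rw [e1]
    rw [smul_mul_assoc, mul_assoc, mul_assoc, hik, mul_one]
  calc ki * a = c⁻¹ • (c • (ki * a)) := by
        rw [smul_smul, inv_mul_cancel₀ hc, one_smul]
    _ = c⁻¹ • (a * ki) := by rw [← e2]

private lemma qnum_two (hq : q ≠ 0) (hQ : q - q⁻¹ ≠ 0) : qnum q 2 = q + q⁻¹ := by
  rw [qnum, div_eq_iff hQ]
  simp only [zpow_neg, zpow_ofNat]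
  field_simp
  ring

private lemma k1E1t (x : U) : g.K1 * (g.E1 * x) = (q ^ (2 : ℤ)) • (g.E1 * (g.K1 * x)) := by
  rw [← mul_assoc, g.relK1E1, smul_mul_assoc, mul_assoc]

private lemma k1E2t (x : U) : g.K1 * (g.E2 * x) = (q ^ (-2 : ℤ)) • (g.E2 * (g.K1 * x)) := by
  rw [← mul_assoc, g.relK1E2, smul_mul_assoc, mul_assoc]

private lemma k1iE1 (hq : q ≠ 0) : g.K1i * g.E1 = (q ^ (-2 : ℤ)) • (g.E1 * g.K1i) := by
  rw [zpow_neg]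
  exact sp4_conj_inv g.E1 g.K1 g.K1i _ (zpow_ne_zero _ hq) g.relK1' g.relK1 g.relK1E1

private lemma k1iE2 (hq : q ≠ 0) : g.K1i * g.E2 = (q ^ (2 : ℤ)) • (g.E2 * g.K1i) := by
  have h := sp4_conj_inv g.E2 g.K1 g.K1i _ (zpow_ne_zero (-2) hq) g.relK1' g.relK1 g.relK1E2
  rw [h]
  congr 1
  rw [← zpow_neg]
  norm_num

private lemma k1iE1t (hq : q ≠ 0) (x : U) :
    g.K1i * (g.E1 * x) = (q ^ (-2 : ℤ)) • (g.E1 * (g.K1i * x)) := by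
  rw [← mul_assoc, k1iE1 g hq, smul_mul_assoc, mul_assoc]

private lemma k1iE2t (hq : q ≠ 0) (x : U) :
    g.K1i * (g.E2 * x) = (q ^ (2 : ℤ)) • (g.E2 * (g.K1i * x)) := by
  rw [← mul_assoc, k1iE2 g hq, smul_mul_assoc, mul_assoc]

private lemma f1e1 : g.F1 * g.E1
    = g.E1 * g.F1 - (q - q⁻¹)⁻¹ • g.K1 + (q - q⁻¹)⁻¹ • g.K1i := by
  have h2 : g.F1 * g.E1 = g.E1 * g.F1 - (q - q⁻¹)⁻¹ • (g.K1 - g.K1i) := by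
    rw [← g.relE1F1]
    abel
  rw [h2, smul_sub]
  abel

private lemma f1e1t (x : U) : g.F1 * (g.E1 * x)
    = g.E1 * (g.F1 * x) - (q - q⁻¹)⁻¹ • (g.K1 * x) + (q - q⁻¹)⁻¹ • (g.K1i * x) := by
  rw [← mul_assoc, f1e1 g, add_mul, sub_mul, smul_mul_assoc, smul_mul_assoc, mul_assoc]

private lemma f1e2 : g.F1 * g.E2 = g.E2 * g.F1 := g.relE2F1.symm

private lemma f1e2t (x : U) : g.F1 * (g.E2 * x) = g.E2 * (g.F1 * x) := by
  rw [← mul_assoc, f1e2 g, mul_assoc]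

private lemma k1k1it (x : U) : g.K1 * (g.K1i * x) = x := by
  rw [← mul_assoc, g.relK1, one_mul]

private lemma k1ik1t (x : U) : g.K1i * (g.K1 * x) = x := by
  rw [← mul_assoc, g.relK1', one_mul]

private lemma cC2 : sEb1 g * Eb4 g = (q ^ (-2 : ℤ)) • (Eb4 g * sEb1 g) := by
  simp only [sEb1, Eb4]
  rw [mul_assoc, g.relK1E2, mul_smul_comm, ← mul_assoc, ← g.relE2F1, mul_assoc]

set_option maxHeartbeats 1000000 in
private lemma cC1 (hq : q ≠ 0) (hQ : q - q⁻¹ ≠ 0) (h1 : q ^ 2 - 1 ≠ 0)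
    (hQ2 : q - q⁻¹ = (q ^ 2 - 1) / q) :
    sEb1 g * Eb3 g = Eb3 g * sEb1 g + (q + q⁻¹) • Eb4 g := by
  simp only [sEb1, Eb3, Eb4]
  simp only [mul_sub, sub_mul, mul_add, add_mul, smul_add, smul_sub, smul_smul,
    mul_smul_comm, smul_mul_assoc, mul_assoc, mul_one, one_mul,
    f1e1t g, f1e2t g, k1E1t g, k1E2t g, k1iE1t g hq, k1iE2t g hq, k1k1it g, k1ik1t g,
    f1e1 g, f1e2 g, g.relK1E1, g.relK1E2, k1iE1 g hq, k1iE2 g hq, g.relK1, g.relK1']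
  match_scalars <;>
    (simp only [hQ2, zpow_neg, zpow_ofNat]; field_simp; try ring)

set_option maxHeartbeats 1000000 in
private lemma cC3 (hq : q ≠ 0) (hQ : q - q⁻¹ ≠ 0) (h1 : q ^ 2 - 1 ≠ 0) (h2 : q ^ 2 + 1 ≠ 0)
    (hQ2 : q - q⁻¹ = (q ^ 2 - 1) / q) (hB2 : q + q⁻¹ = (q ^ 2 + 1) / q) :
    sEb1 g * Eb2 g = (q ^ (2 : ℤ)) • (Eb2 g * sEb1 g) + (q ^ (2 : ℤ)) • Eb3 g := by
  simp only [sEb1, Eb2, Eb3, qnum_two hq hQ, pow_two]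
  simp only [mul_sub, sub_mul, mul_add, add_mul, smul_add, smul_sub, smul_smul,
    mul_smul_comm, smul_mul_assoc, mul_assoc, mul_one, one_mul,
    f1e1t g, f1e2t g, k1E1t g, k1E2t g, k1iE1t g hq, k1iE2t g hq, k1k1it g, k1ik1t g,
    f1e1 g, f1e2 g, g.relK1E1, g.relK1E2, k1iE1 g hq, k1iE2 g hq, g.relK1, g.relK1']
  match_scalars <;>
    (simp only [hQ2, hB2, zpow_neg, zpow_ofNat]; field_simp; try ring)

set_option maxHeartbeats 1000000 in
private lemma rR1 (hq : q ≠ 0) (hQ : q - q⁻¹ ≠ 0) (h1 : q ^ 2 - 1 ≠ 0) (h2 : q ^ 2 + 1 ≠ 0)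
    (hQ2 : q - q⁻¹ = (q ^ 2 - 1) / q) (hB2 : q + q⁻¹ = (q ^ 2 + 1) / q) :
    sEb1 g * sEb3 g = sEb3 g * sEb1 g - (q + q⁻¹) • sEb2 g := by
  simp only [sEb1, sEb2, sEb3, qnum_two hq hQ, pow_two]
  simp only [mul_sub, sub_mul, mul_add, add_mul, smul_add, smul_sub, smul_smul,
    mul_smul_comm, smul_mul_assoc, mul_assoc, mul_one, one_mul]
  match_scalars <;>
    (simp only [hQ2, hB2, zpow_neg, zpow_ofNat]; field_simp; try ring)

private lemma rR2 (hq : q ≠ 0) : sEb1 g * sEb4 g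
    = (q ^ (2 : ℤ)) • (sEb4 g * sEb1 g) - (q ^ (2 : ℤ)) • sEb3 g := by
  simp only [sEb1, sEb3, sEb4]
  simp only [mul_sub, sub_mul, smul_sub, smul_smul, mul_smul_comm, smul_mul_assoc, mul_assoc]
  match_scalars <;> (simp only [zpow_neg, zpow_ofNat]; try field_simp; try ring)

section Plemmas

private lemma pP1 (hq : q ≠ 0) (hQ : q - q⁻¹ ≠ 0) (h1 : q ^ 2 - 1 ≠ 0) (h2 : q ^ 2 + 1 ≠ 0)
    (hQ2 : q - q⁻¹ = (q ^ 2 - 1) / q) (hB2 : q + q⁻¹ = (q ^ 2 + 1) / q) :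
    sEb1 g * sEb3 g * Eb2 g
      = (q ^ (2 : ℤ)) • (sEb3 g * (Eb2 g * sEb1 g)) + (q ^ (2 : ℤ)) • (sEb3 g * Eb3 g)
        - (q + q⁻¹) • (sEb2 g * Eb2 g) := by
  rw [rR1 g hq hQ h1 h2 hQ2 hB2, sub_mul, smul_mul_assoc, mul_assoc,
    cC3 g hq hQ h1 h2 hQ2 hB2]
  simp only [mul_add, mul_smul_comm]
  try abel

private lemma pP2 (hq : q ≠ 0) (hQ : q - q⁻¹ ≠ 0) (h1 : q ^ 2 - 1 ≠ 0) (h2 : q ^ 2 + 1 ≠ 0)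
    (hQ2 : q - q⁻¹ = (q ^ 2 - 1) / q) (hB2 : q + q⁻¹ = (q ^ 2 + 1) / q) :
    sEb1 g * sEb4 g * Eb3 g
      = (q ^ (2 : ℤ)) • (sEb4 g * (Eb3 g * sEb1 g))
        + (q ^ (2 : ℤ) * (q + q⁻¹)) • (sEb4 g * Eb4 g)
        - (q ^ (2 : ℤ)) • (sEb3 g * Eb3 g) := by
  rw [rR2 g hq, sub_mul, smul_mul_assoc, smul_mul_assoc, mul_assoc, cC1 g hq hQ h1 hQ2]
  simp only [mul_add, mul_smul_comm, smul_add, smul_smul]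
  try abel

private lemma pP3 (hq : q ≠ 0) (hQ : q - q⁻¹ ≠ 0) (h1 : q ^ 2 - 1 ≠ 0) (h2 : q ^ 2 + 1 ≠ 0)
    (hQ2 : q - q⁻¹ = (q ^ 2 - 1) / q) (hB2 : q + q⁻¹ = (q ^ 2 + 1) / q) :
    sEb1 g * sEb3 g * Eb3 g * Eb1 g
      = sEb3 g * (Eb3 g * (sEb1 g * Eb1 g)) + (q + q⁻¹) • (sEb3 g * (Eb4 g * Eb1 g))
        - (q + q⁻¹) • (sEb2 g * (Eb3 g * Eb1 g)) := by
  rw [rR1 g hq hQ h1 h2 hQ2 hB2, sub_mul, sub_mul, smul_mul_assoc, smul_mul_assoc,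
    mul_assoc (sEb3 g) (sEb1 g) (Eb3 g), cC1 g hq hQ h1 hQ2]
  simp only [mul_add, add_mul, mul_smul_comm, smul_mul_assoc, mul_assoc]
  try abel

private lemma pP4 (hq : q ≠ 0) :
    sEb1 g * sEb4 g * Eb4 g * Eb1 g
      = sEb4 g * (Eb4 g * (sEb1 g * Eb1 g)) - (q ^ (2 : ℤ)) • (sEb3 g * (Eb4 g * Eb1 g)) := by
  rw [rR2 g hq, sub_mul, sub_mul, smul_mul_assoc, smul_mul_assoc,
    mul_assoc (sEb4 g) (sEb1 g) (Eb4 g), cC2 g]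
  simp only [mul_smul_comm, smul_smul, smul_mul_assoc, mul_assoc]
  match_scalars <;> (simp only [zpow_neg, zpow_ofNat]; try field_simp; try ring)

end Plemmas

set_option maxHeartbeats 2000000 in
private lemma casimir_main (hq0 : 0 < q) (hq1 : q < 1) :
    Cas g =
      ((q - q⁻¹) ^ 2)⁻¹ •
          ((q ^ (-4 : ℤ)) • (g.K1i ^ 2 * g.K2i) + (q ^ (-2 : ℤ)) • g.K2i
            + (q ^ (2 : ℤ)) • g.K2 + (q ^ (4 : ℤ)) • (g.K1 ^ 2 * g.K2))
        + sEb1 g * Eb1 g * ((q ^ (-5 : ℤ)) • (g.K1i ^ 2 * g.K2i) + q • g.K2)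
        + (qnum q 2 ^ 2 * q ^ (-4 : ℤ)) • (sEb2 g * Eb2 g * (g.K1i ^ 2 * g.K2i))
        + sEb3 g * Eb3 g *
            ((q ^ (-5 : ℤ) - (q - q⁻¹) * q ^ (-2 : ℤ)) • (g.K1i ^ 2 * g.K2i)
              + q⁻¹ • g.K2i
              + ((q - q⁻¹) ^ 2 * q ^ (-4 : ℤ)) • (sEb1 g * Eb1 g * (g.K1i ^ 2 * g.K2i)))
        + (qnum q 2 ^ 2) • (sEb4 g * Eb4 g *
            ((q ^ (-4 : ℤ)) • g.K2i
              - ((q - q⁻¹) * q ^ (-5 : ℤ)) • (g.K1i ^ 2 * g.K2i)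
              + ((q - q⁻¹) ^ 2 * q ^ (-7 : ℤ)) • (sEb1 g * Eb1 g * (g.K1i ^ 2 * g.K2i))))
        - ((q - q⁻¹) * qnum q 2 * q ^ (-5 : ℤ)) •
            (((q ^ (2 : ℤ)) • (sEb2 g * Eb3 g * Eb1 g)
              + (q ^ (2 : ℤ)) • (sEb3 g * Eb2 g * sEb1 g)
              + sEb3 g * Eb4 g * Eb1 g + sEb4 g * Eb3 g * sEb1 g) * (g.K1i ^ 2 * g.K2i)) := by
  have hq : q ≠ 0 := ne_of_gt hq0
  have hqi : 1 < q⁻¹ := (one_lt_inv₀ hq0).mpr hq1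
  have hQ : q - q⁻¹ ≠ 0 := ne_of_lt (by linarith)
  have h1 : q ^ 2 - 1 ≠ 0 := by nlinarith
  have h2 : q ^ 2 + 1 ≠ 0 := by positivity
  have hQ2 : q - q⁻¹ = (q ^ 2 - 1) / q := by field_simp
  have hB2 : q + q⁻¹ = (q ^ 2 + 1) / q := by field_simp
  simp only [Cas, CasC, CasQ, qnum_two hq hQ]
  rw [pP1 g hq hQ h1 h2 hQ2 hB2, pP2 g hq hQ h1 h2 hQ2 hB2,
    pP3 g hq hQ h1 h2 hQ2 hB2, pP4 g hq]
  simp only [mul_add, add_mul, mul_sub, sub_mul, smul_add, smul_sub, smul_smul,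
    mul_smul_comm, smul_mul_assoc, mul_assoc, mul_one, one_mul]
  match_scalars <;>
    (try simp only [hQ2, hB2, zpow_neg, zpow_ofNat]; try field_simp; try ring)

end CasimirAux

/-- rewriting of the Casimir with all factors `E_{β₁}`, `E_{β₁}*`
moved to the right. -/
theorem casimir_rewritten (hq0 : 0 < q) (hq1 : q < 1) (g : Sp4Gens q U) :
    Cas g =
      ((q - q⁻¹) ^ 2)⁻¹ •
          ((q ^ (-4 : ℤ)) • (g.K1i ^ 2 * g.K2i) + (q ^ (-2 : ℤ)) • g.K2i
            + (q ^ (2 : ℤ)) • g.K2 + (q ^ (4 : ℤ)) • (g.K1 ^ 2 * g.K2))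
        + sEb1 g * Eb1 g * ((q ^ (-5 : ℤ)) • (g.K1i ^ 2 * g.K2i) + q • g.K2)
        + (qnum q 2 ^ 2 * q ^ (-4 : ℤ)) • (sEb2 g * Eb2 g * (g.K1i ^ 2 * g.K2i))
        + sEb3 g * Eb3 g *
            ((q ^ (-5 : ℤ) - (q - q⁻¹) * q ^ (-2 : ℤ)) • (g.K1i ^ 2 * g.K2i)
              + q⁻¹ • g.K2i
              + ((q - q⁻¹) ^ 2 * q ^ (-4 : ℤ)) • (sEb1 g * Eb1 g * (g.K1i ^ 2 * g.K2i)))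
        + (qnum q 2 ^ 2) • (sEb4 g * Eb4 g *
            ((q ^ (-4 : ℤ)) • g.K2i
              - ((q - q⁻¹) * q ^ (-5 : ℤ)) • (g.K1i ^ 2 * g.K2i)
              + ((q - q⁻¹) ^ 2 * q ^ (-7 : ℤ)) • (sEb1 g * Eb1 g * (g.K1i ^ 2 * g.K2i))))
        - ((q - q⁻¹) * qnum q 2 * q ^ (-5 : ℤ)) •
            (((q ^ (2 : ℤ)) • (sEb2 g * Eb3 g * Eb1 g)
              + (q ^ (2 : ℤ)) • (sEb3 g * Eb2 g * sEb1 g)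
              + sEb3 g * Eb4 g * Eb1 g + sEb4 g * Eb3 g * sEb1 g) * (g.K1i ^ 2 * g.K2i)) := by
  exact casimir_main g hq0 hq1
end
end

section
/- In U = U_q(sp₄) the quantum root vectors E_{ξ₁}, E_{ξ₂}, E_{ξ₃} satisfy the quadratic relations of the quantum symmetric algebra S_q(𝔲₊): E_{ξ₁}E_{ξ₂} = q²E_{ξ₂}E_{ξ₁}; E_{ξ₂}E_{ξ₃} = q²E_{ξ₃}E_{ξ₂}; E_{ξ₁}E_{ξ₃} = E_{ξ₃}E_{ξ₁} + (Qq/[2]_q)E_{ξ₂}². -/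
noncomputable section

set_option maxHeartbeats 2000000

open scoped TensorProduct RealInnerProductSpace

variable {q : ℝ} {U : Type} [Ring U] [Algebra ℝ U]

/-- the radical root vectors satisfy the quadratic relations of the
quantum symmetric algebra `S_q(𝔲₊)`. -/
theorem symmetric_algebra_relations (hq0 : 0 < q) (hq1 : q < 1) (g : Sp4Gens q U) :
    Eb2 g * Eb3 g = (q ^ (2 : ℤ)) • (Eb3 g * Eb2 g) ∧
      Eb3 g * Eb4 g = (q ^ (2 : ℤ)) • (Eb4 g * Eb3 g) ∧
      Eb2 g * Eb4 g
        = Eb4 g * Eb2 g + ((q - q⁻¹) * q / qnum q 2) • (Eb3 g ^ 2) := by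
  have hq : q ≠ 0 := ne_of_gt hq0
  have hiq : 1 < q⁻¹ := (one_lt_inv₀ hq0).mpr hq1
  have hsub : q - q⁻¹ ≠ 0 := by nlinarith
  have hz2 : q ^ (2:ℤ) = q ^ 2 := by
    rw [show ((2:ℤ)) = ((2:ℕ):ℤ) by norm_num, zpow_natCast]
  have hzm2 : q ^ (-2:ℤ) = (q ^ 2)⁻¹ := by rw [zpow_neg, hz2]
  have h2 : qnum q 2 = q + q⁻¹ := by
    rw [qnum, div_eq_iff hsub]
    rw [show ((-2:ℤ)) = -(2:ℤ) by norm_num, zpow_neg, hz2]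
    field_simp; ring
  have h3 : qnum q 3 = q ^ 2 + 1 + (q⁻¹) ^ 2 := by
    rw [qnum, div_eq_iff hsub]
    rw [show ((-3:ℤ)) = -(3:ℤ) by norm_num, zpow_neg,
      show ((3:ℤ)) = ((3:ℕ):ℤ) by norm_num, zpow_natCast]
    field_simp; ring
  have hn2 : qnum q 2 ≠ 0 := by rw [h2]; positivity
  refine ⟨?_, ?_, ?_⟩
  · rw [← sub_eq_zero]
    have key : Eb2 g * Eb3 g - (q ^ (2:ℤ)) • (Eb3 g * Eb2 g)
        = (qnum q 2)⁻¹ • (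
            ((q⁻¹) ^ 2) • (g.E2 * (g.E1 ^ 3 * g.E2 - qnum q 3 • (g.E1 ^ 2 * g.E2 * g.E1)
              + qnum q 3 • (g.E1 * g.E2 * g.E1 ^ 2) - g.E2 * g.E1 ^ 3))
            + g.E1 * (g.E1 * (g.E2 ^ 2 * g.E1
              - (q ^ (2:ℤ) + q ^ (-2:ℤ)) • (g.E2 * g.E1 * g.E2) + g.E1 * g.E2 ^ 2))
            + ((q⁻¹) ^ 2) • ((g.E2 ^ 2 * g.E1
              - (q ^ (2:ℤ) + q ^ (-2:ℤ)) • (g.E2 * g.E1 * g.E2) + g.E1 * g.E2 ^ 2) * (g.E1 * g.E1))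
            - (g.E1 ^ 3 * g.E2 - qnum q 3 • (g.E1 ^ 2 * g.E2 * g.E1)
              + qnum q 3 • (g.E1 * g.E2 * g.E1 ^ 2) - g.E2 * g.E1 ^ 3) * g.E2
            - (1 + (q⁻¹) ^ 2) • (g.E1 * ((g.E2 ^ 2 * g.E1
              - (q ^ (2:ℤ) + q ^ (-2:ℤ)) • (g.E2 * g.E1 * g.E2) + g.E1 * g.E2 ^ 2) * g.E1))) := by
      simp only [Eb2, Eb3, Eb4]
      simp only [pow_succ, pow_zero, one_mul, mul_sub, sub_mul, mul_add, add_mul,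
        smul_mul_assoc, mul_smul_comm, smul_smul, smul_sub, smul_add, mul_assoc]
      match_scalars
      all_goals simp only [h2, h3, hz2, hzm2]
      all_goals field_simp
      all_goals try ring
      all_goals try tauto
    rw [key, g.serreE1, g.serreE2]
    simp
  · rw [← sub_eq_zero]
    have key : Eb3 g * Eb4 g - (q ^ (2:ℤ)) • (Eb4 g * Eb3 g)
        = g.E2 ^ 2 * g.E1 - (q ^ (2:ℤ) + q ^ (-2:ℤ)) • (g.E2 * g.E1 * g.E2)
          + g.E1 * g.E2 ^ 2 := by
      simp only [Eb3, Eb4]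
      simp only [pow_succ, pow_zero, one_mul, mul_sub, sub_mul, mul_add, add_mul,
        smul_mul_assoc, mul_smul_comm, smul_smul, smul_sub, smul_add, mul_assoc]
      match_scalars
      all_goals simp only [h2, h3, hz2, hzm2]
      all_goals field_simp
      all_goals try ring
      all_goals try tauto
    rw [key, g.serreE2]
  · rw [← sub_eq_zero]
    have key : Eb2 g * Eb4 g - (Eb4 g * Eb2 g + ((q - q⁻¹) * q / qnum q 2) • (Eb3 g ^ 2))
        = (qnum q 2)⁻¹ • (
            g.E1 * (g.E2 ^ 2 * g.E1
              - (q ^ (2:ℤ) + q ^ (-2:ℤ)) • (g.E2 * g.E1 * g.E2) + g.E1 * g.E2 ^ 2)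
            - ((q⁻¹) ^ 2) • ((g.E2 ^ 2 * g.E1
              - (q ^ (2:ℤ) + q ^ (-2:ℤ)) • (g.E2 * g.E1 * g.E2) + g.E1 * g.E2 ^ 2) * g.E1)) := by
      simp only [Eb2, Eb3, Eb4]
      simp only [pow_succ, pow_zero, one_mul, mul_sub, sub_mul, mul_add, add_mul,
        smul_mul_assoc, mul_smul_comm, smul_smul, smul_sub, smul_add, mul_assoc]
      match_scalars
      all_goals simp only [h2, h3, hz2, hzm2]
      all_goals field_simp
      all_goals try ring
      all_goals try tauto
    rw [key, g.serreE2]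
    simp
end
end

section
/- The annihilator of R with respect to the pairing B equals the linear span of the six elements y₁⊗y₁, y₃⊗y₃, y₂⊗y₂ − (Qq/[2]_q)y₁⊗y₃, y₁⊗y₂ + q²y₂⊗y₁, y₁⊗y₃ + y₃⊗y₁, y₂⊗y₃ + q²y₃⊗y₂ in W⊗W. That is, {w ∈ W⊗W : B(r, w) = 0 for all r ∈ R} is the span of these six elements. (Quadratic duality: the relations of the quantum exterior algebra Λ_q(𝔲₋) are the orthogonal complement of the relations of S_q(𝔲₊).) -/
/-!
`B (xᵢ ⊗ xⱼ, ·)` is the coordinate functional of `yⱼ ⊗ yᵢ` in the tensor basis, so the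
annihilator of the three relations is cut out by three linear equations on the coordinates of
`w`. Each of the six elements satisfies them, and conversely the equations express the
coordinates at `(1,0)`, `(2,1)`, `(2,0)` through the other six, which writes any solution as an
explicit combination of the six elements.
-/

noncomputable section

open scoped TensorProduct RealInnerProductSpace

open Module Submodule

section Pairing

variable {R M N ι κ : Type*} [CommSemiring R] [AddCommMonoid M] [Module R M]
  [AddCommMonoid N] [Module R N]

theorem LinearMap.apply_eq_basis_repr_of_apply_basis [DecidableEq κ] (B : M →ₗ[R] N →ₗ[R] R)
    (e : ι → M) (b : Basis κ R N) (σ : ι → κ) (h : ∀ i k, B (e i) (b k) = if σ i = k then 1 else 0)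
    (i : ι) (w : N) : B (e i) w = b.repr w (σ i) := by
  have : B (e i) = b.coord (σ i) := b.ext fun k => by simp [h, Finsupp.single_apply, eq_comm]
  rw [this, Basis.coord_apply]

theorem LinearMap.forall_mem_span_apply_eq_zero_iff (B : M →ₗ[R] N →ₗ[R] R) (s : Set M)
    (w : N) : (∀ r ∈ span R s, B r w = 0) ↔ ∀ r ∈ s, B r w = 0 :=
  span_le (p := LinearMap.ker (B.flip w))

end Pairing

namespace QuadraticDual

variable {R V W : Type*} [CommRing R] [AddCommGroup V] [Module R V] [AddCommGroup W] [Module R W]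
  (p a : R)

/-- With `p = q²` and `a = (q - q⁻¹) q / (q + q⁻¹)`, `relations` are the relations of `S_q(𝔲₊)`
and `dualRelations` those of `Λ_q(𝔲₋)`. -/
def relations (x : Fin 3 → V) : Set (V ⊗[R] V) :=
  {x 0 ⊗ₜ x 1 - p • (x 1 ⊗ₜ x 0), x 1 ⊗ₜ x 2 - p • (x 2 ⊗ₜ x 1),
    x 0 ⊗ₜ x 2 - x 2 ⊗ₜ x 0 - a • (x 1 ⊗ₜ x 1)}

def dualRelations (y : Fin 3 → W) : Set (W ⊗[R] W) :=
  {y 0 ⊗ₜ y 0, y 2 ⊗ₜ y 2, y 1 ⊗ₜ y 1 - a • (y 0 ⊗ₜ y 2), y 0 ⊗ₜ y 1 + p • (y 1 ⊗ₜ y 0),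
    y 0 ⊗ₜ y 2 + y 2 ⊗ₜ y 0, y 1 ⊗ₜ y 2 + p • (y 2 ⊗ₜ y 1)}

def IsDualRelationsCoords (c : Fin 3 × Fin 3 →₀ R) : Prop :=
  c (1, 0) = p * c (0, 1) ∧ c (2, 1) = p * c (1, 2) ∧ c (2, 0) = c (0, 2) + a * c (1, 1)

variable {p a} (x : Basis (Fin 3) R V) (y : Basis (Fin 3) R W)
  {B : V ⊗[R] V →ₗ[R] W ⊗[R] W →ₗ[R] R}

theorem pairing_tmul_eq_repr
    (hB : ∀ i j k l, B (x i ⊗ₜ x j) (y k ⊗ₜ y l) = if i = l ∧ j = k then 1 else 0)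
    (i j : Fin 3) (w : W ⊗[R] W) : B (x i ⊗ₜ x j) w = (y.tensorProduct y).repr w (j, i) :=
  B.apply_eq_basis_repr_of_apply_basis (fun ij => x ij.1 ⊗ₜ x ij.2) (y.tensorProduct y)
    Prod.swap (fun ⟨_, _⟩ ⟨_, _⟩ => by simp [hB, and_comm]) (i, j) w

theorem forall_mem_span_relations_iff
    (hB : ∀ i j k l, B (x i ⊗ₜ x j) (y k ⊗ₜ y l) = if i = l ∧ j = k then 1 else 0)
    (w : W ⊗[R] W) : (∀ r ∈ span R (relations p a x), B r w = 0) ↔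
      IsDualRelationsCoords p a ((y.tensorProduct y).repr w) := by
  simp only [B.forall_mem_span_apply_eq_zero_iff, relations, Set.forall_mem_insert,
    Set.mem_singleton_iff, forall_eq, map_sub, map_add, map_smul, LinearMap.sub_apply,
    LinearMap.add_apply, LinearMap.smul_apply,
    pairing_tmul_eq_repr x y hB, smul_eq_mul, sub_sub, sub_eq_zero, IsDualRelationsCoords]

theorem isDualRelationsCoords_repr_of_mem_span {w : W ⊗[R] W}
    (hw : w ∈ span R (dualRelations p a y)) :
    IsDualRelationsCoords p a ((y.tensorProduct y).repr w) := by
  induction hw using span_induction with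
  | mem u hu =>
    rcases hu with rfl | rfl | rfl | rfl | rfl | rfl <;> simp [IsDualRelationsCoords]
  | zero => simp [IsDualRelationsCoords]
  | add u v _ _ hu hv =>
    simp only [IsDualRelationsCoords, map_add, Finsupp.add_apply]
    exact ⟨by linear_combination hu.1 + hv.1, by linear_combination hu.2.1 + hv.2.1,
      by linear_combination hu.2.2 + hv.2.2⟩
  | smul t u _ hu =>
    simp only [IsDualRelationsCoords, map_smul, Finsupp.smul_apply, smul_eq_mul]
    exact ⟨by linear_combination t * hu.1, by linear_combination t * hu.2.1,
      by linear_combination t * hu.2.2⟩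

theorem mem_span_dualRelations_of_isDualRelationsCoords {w : W ⊗[R] W}
    (hw : IsDualRelationsCoords p a ((y.tensorProduct y).repr w)) :
    w ∈ span R (dualRelations p a y) := by
  set c := (y.tensorProduct y).repr w
  obtain ⟨h10, h21, h20⟩ := hw
  have hdecomp : w = c (0, 0) • (y 0 ⊗ₜ y 0) + c (2, 2) • (y 2 ⊗ₜ y 2)
      + c (1, 1) • (y 1 ⊗ₜ y 1 - a • (y 0 ⊗ₜ y 2)) + c (0, 1) • (y 0 ⊗ₜ y 1 + p • (y 1 ⊗ₜ y 0))
      + c (2, 0) • (y 0 ⊗ₜ y 2 + y 2 ⊗ₜ y 0) + c (1, 2) • (y 1 ⊗ₜ y 2 + p • (y 2 ⊗ₜ y 1)) := by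
    calc w = ∑ k, c k • (y.tensorProduct y) k := ((y.tensorProduct y).sum_repr w).symm
      _ = _ := by
        simp only [Fintype.sum_prod_type, Fin.sum_univ_three, Basis.tensorProduct_apply, h10,
          h21, h20]
        match_scalars <;> ring
  rw [hdecomp]
  refine add_mem (add_mem (add_mem (add_mem (add_mem ?_ ?_) ?_) ?_) ?_) ?_ <;>
    exact smul_mem _ _ (subset_span (by simp [dualRelations]))

theorem mem_span_dualRelations_iff (w : W ⊗[R] W) :
    w ∈ span R (dualRelations p a y) ↔ IsDualRelationsCoords p a ((y.tensorProduct y).repr w) :=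
  ⟨isDualRelationsCoords_repr_of_mem_span y, mem_span_dualRelations_of_isDualRelationsCoords y⟩

theorem setOf_forall_mem_span_relations_eq
    (hB : ∀ i j k l, B (x i ⊗ₜ x j) (y k ⊗ₜ y l) = if i = l ∧ j = k then 1 else 0) :
    {w | ∀ r ∈ span R (relations p a x), B r w = 0} = span R (dualRelations p a y) := by
  ext w
  rw [Set.mem_ofPred_eq, forall_mem_span_relations_iff x y hB, SetLike.mem_coe,
    mem_span_dualRelations_iff]

end QuadraticDual

theorem quadratic_duality_general (q : ℝ)
    {V W : Type} [AddCommGroup V] [Module ℝ V] [AddCommGroup W] [Module ℝ W]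
    (x : Module.Basis (Fin 3) ℝ V) (y : Module.Basis (Fin 3) ℝ W)
    (B : V ⊗[ℝ] V →ₗ[ℝ] W ⊗[ℝ] W →ₗ[ℝ] ℝ)
    (hB : ∀ i j k l : Fin 3,
      B (x i ⊗ₜ[ℝ] x j) (y k ⊗ₜ[ℝ] y l) = if i = l ∧ j = k then 1 else 0) :
    {w : W ⊗[ℝ] W |
        ∀ r ∈ Submodule.span ℝ ({x 0 ⊗ₜ[ℝ] x 1 - (q ^ (2 : ℤ)) • (x 1 ⊗ₜ[ℝ] x 0),
          x 1 ⊗ₜ[ℝ] x 2 - (q ^ (2 : ℤ)) • (x 2 ⊗ₜ[ℝ] x 1),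
          x 0 ⊗ₜ[ℝ] x 2 - x 2 ⊗ₜ[ℝ] x 0
            - ((q - q⁻¹) * q / (q + q⁻¹)) • (x 1 ⊗ₜ[ℝ] x 1)} : Set (V ⊗[ℝ] V)),
          B r w = 0}
      = ↑(Submodule.span ℝ ({y 0 ⊗ₜ[ℝ] y 0, y 2 ⊗ₜ[ℝ] y 2,
          y 1 ⊗ₜ[ℝ] y 1 - ((q - q⁻¹) * q / (q + q⁻¹)) • (y 0 ⊗ₜ[ℝ] y 2),
          y 0 ⊗ₜ[ℝ] y 1 + (q ^ (2 : ℤ)) • (y 1 ⊗ₜ[ℝ] y 0),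
          y 0 ⊗ₜ[ℝ] y 2 + y 2 ⊗ₜ[ℝ] y 0,
          y 1 ⊗ₜ[ℝ] y 2 + (q ^ (2 : ℤ)) • (y 2 ⊗ₜ[ℝ] y 1)} : Set (W ⊗[ℝ] W))) :=
  QuadraticDual.setOf_forall_mem_span_relations_eq x y hB

/-- quadratic duality. The annihilator of the relations `R` of
`S_q(𝔲₊)` with respect to the pairing `B` is the span of the six relations of the
quantum exterior algebra `Λ_q(𝔲₋)`. -/
theorem quadratic_duality (q : ℝ) (hq0 : 0 < q) (hq1 : q < 1)
    {V W : Type} [AddCommGroup V] [Module ℝ V] [AddCommGroup W] [Module ℝ W]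
    (x : Module.Basis (Fin 3) ℝ V) (y : Module.Basis (Fin 3) ℝ W)
    (B : V ⊗[ℝ] V →ₗ[ℝ] W ⊗[ℝ] W →ₗ[ℝ] ℝ)
    (hB : ∀ i j k l : Fin 3,
      B (x i ⊗ₜ[ℝ] x j) (y k ⊗ₜ[ℝ] y l) = if i = l ∧ j = k then 1 else 0) :
    {w : W ⊗[ℝ] W |
        ∀ r ∈ Submodule.span ℝ ({x 0 ⊗ₜ[ℝ] x 1 - (q ^ (2 : ℤ)) • (x 1 ⊗ₜ[ℝ] x 0),
          x 1 ⊗ₜ[ℝ] x 2 - (q ^ (2 : ℤ)) • (x 2 ⊗ₜ[ℝ] x 1),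
          x 0 ⊗ₜ[ℝ] x 2 - x 2 ⊗ₜ[ℝ] x 0
            - ((q - q⁻¹) * q / (q + q⁻¹)) • (x 1 ⊗ₜ[ℝ] x 1)} : Set (V ⊗[ℝ] V)),
          B r w = 0}
      = ↑(Submodule.span ℝ ({y 0 ⊗ₜ[ℝ] y 0, y 2 ⊗ₜ[ℝ] y 2,
          y 1 ⊗ₜ[ℝ] y 1 - ((q - q⁻¹) * q / (q + q⁻¹)) • (y 0 ⊗ₜ[ℝ] y 2),
          y 0 ⊗ₜ[ℝ] y 1 + (q ^ (2 : ℤ)) • (y 1 ⊗ₜ[ℝ] y 0),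
          y 0 ⊗ₜ[ℝ] y 2 + y 2 ⊗ₜ[ℝ] y 0,
          y 1 ⊗ₜ[ℝ] y 2 + (q ^ (2 : ℤ)) • (y 2 ⊗ₜ[ℝ] y 1)} : Set (W ⊗[ℝ] W))) :=
  quadratic_duality_general q x y B hB
end
end

section
/- Let B : Λ × Λ → ℝ be any symmetric bilinear form satisfying the invariance conditions B(ρ(K₁)u, v) = B(u, ρ(K₁)v), B(ρ(K₂)u, v) = B(u, ρ(K₂)v), B(ρ(E₁)u, v) = B(u, (ρ(F₁)∘ρ(K₁))v), and B(ρ(F₁)u, v) = B(u, (ρ(K₁)⁻¹∘ρ(E₁))v) for all u, v ∈ Λ. Then the basis w₀, w₁, w₂, w₃, w₂₁, w₃₁, w₃₂, w₃₂₁ is B-orthogonal and there exist real constants c₀, c₁, c₂, c₃ such that B(w₀,w₀) = c₀, B(w₁,w₁) = c₁, B(w₂,w₂) = c₁/[2]_q, B(w₃,w₃) = c₁q⁻², B(w₂₁,w₂₁) = c₂, B(w₃₁,w₃₁) = c₂[2]_q, B(w₃₂,w₃₂) = c₂q⁻², B(w₃₂₁,w₃₂₁) = c₃. (Classification of the U_q(𝔩)-invariant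 inner products on the quantum exterior algebra Λ_q(𝔲₋).) -/
/-!
`ρ(K₁)` and `ρ(K₂)` are diagonal in the basis, and the pairs of exponents of `q` by which they
act on the eight basis vectors are pairwise distinct. Since `0 < q ≠ 1`, distinct exponents give
distinct eigenvalues, and an operator that is self-adjoint for `B` makes eigenvectors with
distinct eigenvalues `B`-orthogonal. For the diagonal, `ρ(E₁)` moves along the strings
`w₁ → w₂ → w₃` and `w₂₁ → w₃₁ → w₃₂` while `ρ(F₁)ρ(K₁)` moves back, each by a scalar, so
`B(ρ(E₁)v, w) = B(v, ρ(F₁)ρ(K₁)w)` fixes the ratio of `B(w, w)` to `B(v, v)` along each string.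
-/

noncomputable section

open scoped TensorProduct RealInnerProductSpace

variable {Λ : Type} [AddCommGroup Λ] [Module ℝ Λ]

/-- The operator `ρ(K₁)` on `Λ`. -/
def rhoK1 (q : ℝ) (b : Module.Basis (Fin 8) ℝ Λ) : Module.End ℝ Λ :=
  b.constr ℝ ![b 0, (q ^ (-2 : ℤ)) • b 1, b 2, (q ^ (2 : ℤ)) • b 3, (q ^ (-2 : ℤ)) • b 4,
    b 5, (q ^ (2 : ℤ)) • b 6, b 7]

/-- The operator `ρ(K₂)` on `Λ`. -/
def rhoK2 (q : ℝ) (b : Module.Basis (Fin 8) ℝ Λ) : Module.End ℝ Λ :=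
  b.constr ℝ ![b 0, b 1, (q ^ (-2 : ℤ)) • b 2, (q ^ (-4 : ℤ)) • b 3, (q ^ (-2 : ℤ)) • b 4,
    (q ^ (-4 : ℤ)) • b 5, (q ^ (-6 : ℤ)) • b 6, (q ^ (-6 : ℤ)) • b 7]

/-- The operator `ρ(E₁)` on `Λ`. -/
def rhoE1 (q : ℝ) (b : Module.Basis (Fin 8) ℝ Λ) : Module.End ℝ Λ :=
  b.constr ℝ ![0, -((q + q⁻¹)) • b 2, -(q ^ (2 : ℤ)) • b 3, 0, -b 5,
    -((q + q⁻¹) * q ^ (2 : ℤ)) • b 6, 0, 0]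

/-- The operator `ρ(F₁)` on `Λ`. -/
def rhoF1 (q : ℝ) (b : Module.Basis (Fin 8) ℝ Λ) : Module.End ℝ Λ :=
  b.constr ℝ ![0, 0, -b 1, -((q + q⁻¹) * q ^ (-2 : ℤ)) • b 2, 0, -((q + q⁻¹)) • b 4,
    -(q ^ (-2 : ℤ)) • b 5, 0]

/-- The operator `ρ(K₁)⁻¹` on `Λ`. -/
def rhoK1i (q : ℝ) (b : Module.Basis (Fin 8) ℝ Λ) : Module.End ℝ Λ :=
  b.constr ℝ ![b 0, (q ^ (2 : ℤ)) • b 1, b 2, (q ^ (-2 : ℤ)) • b 3, (q ^ (2 : ℤ)) • b 4,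
    b 5, (q ^ (-2 : ℤ)) • b 6, b 7]

/-- The operator `ρ(K₂)⁻¹` on `Λ`. -/
def rhoK2i (q : ℝ) (b : Module.Basis (Fin 8) ℝ Λ) : Module.End ℝ Λ :=
  b.constr ℝ ![b 0, b 1, (q ^ (2 : ℤ)) • b 2, (q ^ (4 : ℤ)) • b 3, (q ^ (2 : ℤ)) • b 4,
    (q ^ (4 : ℤ)) • b 5, (q ^ (6 : ℤ)) • b 6, (q ^ (6 : ℤ)) • b 7]

def weightK1 : Fin 8 → ℤ := ![0, -2, 0, 2, -2, 0, 2, 0]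

def weightK2 : Fin 8 → ℤ := ![0, 0, -2, -4, -2, -4, -6, -6]

lemma rhoK1_basis (q : ℝ) (b : Module.Basis (Fin 8) ℝ Λ) (i : Fin 8) :
    rhoK1 q b (b i) = q ^ weightK1 i • b i := by
  fin_cases i <;> simp [rhoK1, weightK1]

lemma rhoK2_basis (q : ℝ) (b : Module.Basis (Fin 8) ℝ Λ) (i : Fin 8) :
    rhoK2 q b (b i) = q ^ weightK2 i • b i := by
  fin_cases i <;> simp [rhoK2, weightK2]

lemma weightK1_weightK2_injective : Function.Injective fun i ↦ (weightK1 i, weightK2 i) := by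
  decide

section InvariantForm

variable {R M : Type*} [CommRing R] [AddCommGroup M] [Module R M] (B : M →ₗ[R] M →ₗ[R] R)

lemma LinearMap.apply_eq_zero_of_eigenvalues_ne [NoZeroDivisors R] {T : Module.End R M}
    (hT : ∀ u v, B (T u) v = B u (T v)) {v w : M} {a c : R} (hv : T v = a • v)
    (hw : T w = c • w) (hac : a ≠ c) : B v w = 0 := by
  have h := hT v w
  rw [hv, hw, map_smul, map_smul, LinearMap.smul_apply, smul_eq_mul, smul_eq_mul] at h
  by_contra hvw
  exact hac (mul_right_cancel₀ hvw h)

lemma LinearMap.mul_apply_self_eq_of_adjoint {E G : Module.End R M}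
    (hEG : ∀ u v, B (E u) v = B u (G v)) {v w : M} {α β : R} (hE : E v = α • w)
    (hG : G w = β • v) : α * B w w = β * B v v := by
  simpa [hE, hG] using hEG v w

end InvariantForm

lemma apply_basis_eq_zero_of_rhoK_invariant {q : ℝ} (hq0 : 0 < q) (hq1 : q ≠ 1)
    (b : Module.Basis (Fin 8) ℝ Λ) (B : Λ →ₗ[ℝ] Λ →ₗ[ℝ] ℝ)
    (hK1 : ∀ u v : Λ, B (rhoK1 q b u) v = B u (rhoK1 q b v))
    (hK2 : ∀ u v : Λ, B (rhoK2 q b u) v = B u (rhoK2 q b v)) {i j : Fin 8} (hij : i ≠ j) :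
    B (b i) (b j) = 0 := by
  have hzpow := zpow_right_injective₀ hq0 hq1
  by_cases h1 : weightK1 i = weightK1 j
  · exact B.apply_eq_zero_of_eigenvalues_ne hK2 (rhoK2_basis q b i) (rhoK2_basis q b j)
      (hzpow.ne fun h2 ↦ hij (weightK1_weightK2_injective (Prod.ext h1 h2)))
  · exact B.apply_eq_zero_of_eigenvalues_ne hK1 (rhoK1_basis q b i) (rhoK1_basis q b j)
      (hzpow.ne h1)

theorem invariant_inner_products_general (q : ℝ) (hq0 : 0 < q) (hq1 : q < 1)
    (b : Module.Basis (Fin 8) ℝ Λ) (B : Λ →ₗ[ℝ] Λ →ₗ[ℝ] ℝ)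
    (hK1 : ∀ u v : Λ, B (rhoK1 q b u) v = B u (rhoK1 q b v))
    (hK2 : ∀ u v : Λ, B (rhoK2 q b u) v = B u (rhoK2 q b v))
    (hE1 : ∀ u v : Λ, B (rhoE1 q b u) v = B u ((rhoF1 q b * rhoK1 q b) v)) :
    (∀ i j : Fin 8, i ≠ j → B (b i) (b j) = 0) ∧
      ∃ c0 c1 c2 c3 : ℝ,
        B (b 0) (b 0) = c0 ∧ B (b 1) (b 1) = c1 ∧
        B (b 2) (b 2) = c1 / (q + q⁻¹) ∧ B (b 3) (b 3) = c1 * q ^ (-2 : ℤ) ∧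
        B (b 4) (b 4) = c2 ∧ B (b 5) (b 5) = c2 * (q + q⁻¹) ∧
        B (b 6) (b 6) = c2 * q ^ (-2 : ℤ) ∧ B (b 7) (b 7) = c3 := by
  have hq : q ≠ 0 := hq0.ne'
  have h2 : q + q⁻¹ ≠ 0 := by positivity
  have e12 := B.mul_apply_self_eq_of_adjoint hE1 (v := b 1) (w := b 2)
    (α := -(q + q⁻¹)) (β := -1) (by simp [rhoE1]) (by simp [rhoF1, rhoK1])
  have e23 := B.mul_apply_self_eq_of_adjoint hE1 (v := b 2) (w := b 3)
    (α := -q ^ 2) (β := -(q + q⁻¹)) (by simp [rhoE1])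
    (by simp [rhoF1, rhoK1, smul_smul, mul_left_comm (q ^ 2), hq]; module)
  have e45 := B.mul_apply_self_eq_of_adjoint hE1 (v := b 4) (w := b 5)
    (α := -1) (β := -(q + q⁻¹)) (by simp [rhoE1]) (by simp [rhoF1, rhoK1])
  have e56 := B.mul_apply_self_eq_of_adjoint hE1 (v := b 5) (w := b 6)
    (α := -((q + q⁻¹) * q ^ 2)) (β := -1) (by simp [rhoE1])
    (by simp [rhoF1, rhoK1, smul_smul, hq])
  refine ⟨fun i j ↦ apply_basis_eq_zero_of_rhoK_invariant hq0 hq1.ne b B hK1 hK2,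
    B (b 0) (b 0), B (b 1) (b 1), B (b 4) (b 4), B (b 7) (b 7), rfl, rfl, ?_, ?_, rfl, ?_, ?_, rfl⟩
  · rw [eq_div_iff h2]
    linear_combination -e12
  · rw [zpow_neg, zpow_two, eq_mul_inv_iff_mul_eq₀ (by positivity)]
    linear_combination -e23 - e12
  · linear_combination -e45
  · rw [zpow_neg, zpow_two, eq_mul_inv_iff_mul_eq₀ (by positivity)]
    refine mul_left_cancel₀ h2 ?_
    linear_combination -e56 - e45

/-- classification of the `U_q(𝔩)`-invariant inner products on the
quantum exterior algebra `Λ_q(𝔲₋)`. -/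
theorem invariant_inner_products (q : ℝ) (hq0 : 0 < q) (hq1 : q < 1)
    (b : Module.Basis (Fin 8) ℝ Λ) (B : Λ →ₗ[ℝ] Λ →ₗ[ℝ] ℝ)
    (hsymm : ∀ u v : Λ, B u v = B v u)
    (hK1 : ∀ u v : Λ, B (rhoK1 q b u) v = B u (rhoK1 q b v))
    (hK2 : ∀ u v : Λ, B (rhoK2 q b u) v = B u (rhoK2 q b v))
    (hE1 : ∀ u v : Λ, B (rhoE1 q b u) v = B u ((rhoF1 q b * rhoK1 q b) v))
    (hF1 : ∀ u v : Λ, B (rhoF1 q b u) v = B u ((rhoK1i q b * rhoE1 q b) v)) :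
    (∀ i j : Fin 8, i ≠ j → B (b i) (b j) = 0) ∧
      ∃ c0 c1 c2 c3 : ℝ,
        B (b 0) (b 0) = c0 ∧ B (b 1) (b 1) = c1 ∧
        B (b 2) (b 2) = c1 / (q + q⁻¹) ∧ B (b 3) (b 3) = c1 * q ^ (-2 : ℤ) ∧
        B (b 4) (b 4) = c2 ∧ B (b 5) (b 5) = c2 * (q + q⁻¹) ∧
        B (b 6) (b 6) = c2 * q ^ (-2 : ℤ) ∧ B (b 7) (b 7) = c3 :=
  invariant_inner_products_general q hq0 hq1 b B hK1 hK2 hE1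
end
end
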